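/- arXiv:2312.10330 — 5 statements merged into one kernel-verified Lean document; each statement's English description precedes it below -/
import Mathlib

section
/- Suppose (θ_n)_{n≥1}, (g_n^i), (Δ_n) form a block majorization-minimization scheme for f started at θ_0, where now each Θ_i is a metric space with distance d, f is bounded below by f* ∈ ℝ, and there are a constant c > 0 and a strictly increasing function φ : [0,∞) → ℝ with φ(0) = 0 such that g_n^i(θ) − f_n^i(θ) ≥ c·φ(d(θ, θ_{n−1}^i)) for all n ≥ 1, i = 1,…,m and θ ∈ Θ_i. Then for every N ≥ 1: c·Σ_{n=1}^N Σ_{i=1}^m φ(d(θ_{n−1}^i, θ_n^i)) ≤ f(θ_0) − f* + m·Σ_{n=1}^N Δ_n. In particular, if Σ_{n=1}^∞ Δ_n < ∞, then d(θ_{n−1}^i, θ_n^i) → 0 as n → ∞ for each i = 1,…,m. -/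
/-- The point of the product space whose first `i-1` blocks are those of `θ n`, whose
`i`-th block is `v`, and whose remaining blocks are those of `θ (n-1)`.  Thus the `i`-th
marginal objective at cycle `n` is `fun v => f (mixPt θ n i v)`. -/
def mixPt {m : ℕ} {X : Fin m → Type*} (θ : ℕ → ∀ i, X i) (n : ℕ) (i : Fin m)
    (v : X i) : ∀ j, X j :=
  Function.update (fun j => if (j : ℕ) < (i : ℕ) then θ n j else θ (n - 1) j) i v

private lemma sum_Icc_one_eq_sum_range (h : ℕ → ℝ) :
    ∀ N, ∑ n ∈ Finset.Icc 1 N, h n = ∑ k ∈ Finset.range N, h (k + 1)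
  | 0 => by simp
  | N + 1 => by
    rw [Finset.sum_Icc_succ_top (by omega), sum_Icc_one_eq_sum_range h N,
      Finset.sum_range_succ]

/-- summability of surrogate gaps and vanishing step sizes.  For a block
majorization-minimization scheme on metric-space blocks with `f` bounded below by `f*` and
surrogate gaps `g_n^i(θ) - f_n^i(θ) ≥ c φ(d(θ, θ_{n-1}^i))` for a strictly increasing
`φ : [0,∞) → ℝ` with `φ(0) = 0`: for every `N ≥ 1`,
`c ∑_{n=1}^N ∑_i φ(d(θ_{n-1}^i, θ_n^i)) ≤ f(θ_0) - f* + m ∑_{n=1}^N Δ_n`, and if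
`∑_n Δ_n < ∞`, then `d(θ_{n-1}^i, θ_n^i) → 0` for each `i`. -/
theorem bmm_step_sizes_vanish {m : ℕ} (hm : 1 ≤ m) {X : Fin m → Type*}
    [∀ i, MetricSpace (X i)]
    (f : (∀ i, X i) → ℝ) (θ : ℕ → ∀ i, X i)
    (g : ℕ → ∀ i : Fin m, X i → ℝ) (Δ : ℕ → ℝ)
    (hΔ : ∀ n, 1 ≤ n → 0 ≤ Δ n)
    (hmaj : ∀ n, 1 ≤ n → ∀ i, ∀ v : X i, f (mixPt θ n i v) ≤ g n i v)
    (hsharp : ∀ n, 1 ≤ n → ∀ i, g n i (θ (n - 1) i) = f (mixPt θ n i (θ (n - 1) i)))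
    (hopt : ∀ n, 1 ≤ n → ∀ i, ∀ v : X i, g n i (θ n i) ≤ g n i v + Δ n)
    (fstar : ℝ) (hbdd : ∀ x, fstar ≤ f x)
    (c : ℝ) (hc : 0 < c)
    (φ : ℝ → ℝ) (hφ : StrictMonoOn φ (Set.Ici 0)) (hφ0 : φ 0 = 0)
    (hgap : ∀ n, 1 ≤ n → ∀ i, ∀ v : X i,
      c * φ (dist v (θ (n - 1) i)) ≤ g n i v - f (mixPt θ n i v)) :
    (∀ N, 1 ≤ N →
      c * ∑ n ∈ Finset.Icc 1 N, ∑ i, φ (dist (θ (n - 1) i) (θ n i))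
        ≤ f (θ 0) - fstar + (m : ℝ) * ∑ n ∈ Finset.Icc 1 N, Δ n)
    ∧ ((Summable fun n => Δ (n + 1)) →
        ∀ i, Filter.Tendsto (fun n => dist (θ n i) (θ (n + 1) i)) Filter.atTop (nhds 0)) := by
  classical
  -- The intermediate points of cycle `n`: first `k` blocks updated.
  set Q : ℕ → ℕ → ∀ j, X j := fun n k j => if (j : ℕ) < k then θ n j else θ (n - 1) j with hQ
  have hQ0 : ∀ n, Q n 0 = θ (n - 1) := by
    intro n; funext j; simp [hQ]
  have hQm : ∀ n, Q n m = θ n := by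
    intro n; funext j; simp [hQ, j.isLt]
  have hmix1 : ∀ n (i : Fin m), mixPt θ n i (θ (n - 1) i) = Q n i := by
    intro n i; funext j
    by_cases h : j = i
    · subst h
      simp [mixPt, hQ]
    · rw [mixPt, Function.update_of_ne h]
  have hmix2 : ∀ n (i : Fin m), mixPt θ n i (θ n i) = Q n (i + 1) := by
    intro n i; funext j
    by_cases h : j = i
    · subst h
      simp [mixPt, hQ]
    · rw [mixPt, Function.update_of_ne h]
      have hne : (j : ℕ) ≠ (i : ℕ) := fun hh => h (Fin.ext hh)
      simp only [hQ]
      split_ifs with h1 h2 <;> first | rfl | omega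
  -- per-block inequality
  have key : ∀ n, 1 ≤ n → ∀ i : Fin m,
      c * φ (dist (θ (n - 1) i) (θ n i)) ≤ Δ n + (f (Q n i) - f (Q n (i + 1))) := by
    intro n hn i
    have h1 := hgap n hn i (θ n i)
    have h2 := hopt n hn i (θ (n - 1) i)
    have h3 := hsharp n hn i
    rw [hmix2 n i] at h1
    rw [hmix1 n i] at h3
    rw [h3] at h2
    rw [dist_comm]
    linarith
  -- per-cycle inequality
  have cyc : ∀ n, 1 ≤ n →
      c * ∑ i : Fin m, φ (dist (θ (n - 1) i) (θ n i))
        ≤ (m : ℝ) * Δ n + (f (θ (n - 1)) - f (θ n)) := by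
    intro n hn
    have hsum : ∑ i : Fin m, (Δ n + (f (Q n i) - f (Q n ((i : ℕ) + 1))))
        = (m : ℝ) * Δ n + (f (Q n 0) - f (Q n m)) := by
      rw [Finset.sum_add_distrib, Finset.sum_const, Finset.card_univ, Fintype.card_fin,
        nsmul_eq_mul]
      congr 1
      rw [Fin.sum_univ_eq_sum_range (fun k => f (Q n k) - f (Q n (k + 1))) m,
        Finset.sum_range_sub' (fun k => f (Q n k)) m]
    calc c * ∑ i : Fin m, φ (dist (θ (n - 1) i) (θ n i))
        = ∑ i : Fin m, c * φ (dist (θ (n - 1) i) (θ n i)) := Finset.mul_sum _ _ _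
      _ ≤ ∑ i : Fin m, (Δ n + (f (Q n i) - f (Q n ((i : ℕ) + 1)))) :=
          Finset.sum_le_sum fun i _ => key n hn i
      _ = (m : ℝ) * Δ n + (f (Q n 0) - f (Q n m)) := hsum
      _ = (m : ℝ) * Δ n + (f (θ (n - 1)) - f (θ n)) := by rw [hQ0, hQm]
  -- Part 1
  have part1 : ∀ N, 1 ≤ N →
      c * ∑ n ∈ Finset.Icc 1 N, ∑ i, φ (dist (θ (n - 1) i) (θ n i))
        ≤ f (θ 0) - fstar + (m : ℝ) * ∑ n ∈ Finset.Icc 1 N, Δ n := by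
    intro N hN
    have tel : ∑ n ∈ Finset.Icc 1 N, (f (θ (n - 1)) - f (θ n)) = f (θ 0) - f (θ N) := by
      rw [sum_Icc_one_eq_sum_range (fun n => f (θ (n - 1)) - f (θ n))]
      simp only [Nat.add_sub_cancel]
      exact Finset.sum_range_sub' (fun k => f (θ k)) N
    have hchain : c * ∑ n ∈ Finset.Icc 1 N, ∑ i, φ (dist (θ (n - 1) i) (θ n i))
        ≤ (m : ℝ) * ∑ n ∈ Finset.Icc 1 N, Δ n + (f (θ 0) - f (θ N)) := by
      calc c * ∑ n ∈ Finset.Icc 1 N, ∑ i, φ (dist (θ (n - 1) i) (θ n i))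
          = ∑ n ∈ Finset.Icc 1 N, c * ∑ i, φ (dist (θ (n - 1) i) (θ n i)) :=
            Finset.mul_sum _ _ _
        _ ≤ ∑ n ∈ Finset.Icc 1 N, ((m : ℝ) * Δ n + (f (θ (n - 1)) - f (θ n))) :=
            Finset.sum_le_sum fun n hn => cyc n (Finset.mem_Icc.1 hn).1
        _ = (m : ℝ) * ∑ n ∈ Finset.Icc 1 N, Δ n + (f (θ 0) - f (θ N)) := by
            rw [Finset.sum_add_distrib, tel, ← Finset.mul_sum]
    have := hbdd (θ N)
    linarith
  refine ⟨part1, ?_⟩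
  -- Part 2
  intro hΔsum
  have hφnn : ∀ x : ℝ, 0 ≤ x → 0 ≤ φ x := by
    intro x hx
    rw [← hφ0]
    exact hφ.monotoneOn Set.self_mem_Ici hx hx
  set a : ℕ → ℝ := fun k => ∑ i, φ (dist (θ k i) (θ (k + 1) i)) with ha
  have ha_nonneg : ∀ k, 0 ≤ a k := fun k =>
    Finset.sum_nonneg fun i _ => hφnn _ dist_nonneg
  have htsum_nn : 0 ≤ ∑' n, Δ (n + 1) :=
    tsum_nonneg fun n => hΔ (n + 1) (by omega)
  have hCnn : (0:ℝ) ≤ f (θ 0) - fstar + (m : ℝ) * ∑' n, Δ (n + 1) := by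
    have := hbdd (θ 0)
    have : (0:ℝ) ≤ (m : ℝ) * ∑' n, Δ (n + 1) := by positivity
    linarith [hbdd (θ 0)]
  have hbound : ∀ N, ∑ k ∈ Finset.range N, a k
      ≤ (f (θ 0) - fstar + (m : ℝ) * ∑' n, Δ (n + 1)) / c := by
    intro N
    rcases Nat.eq_zero_or_pos N with h0 | hN
    · subst h0
      simpa using div_nonneg hCnn hc.le
    have heq : ∑ n ∈ Finset.Icc 1 N, ∑ i, φ (dist (θ (n - 1) i) (θ n i))
        = ∑ k ∈ Finset.range N, a k := by
      rw [sum_Icc_one_eq_sum_range (fun n => ∑ i, φ (dist (θ (n - 1) i) (θ n i)))]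
      simp only [Nat.add_sub_cancel, ha]
    have hΔle : ∑ n ∈ Finset.Icc 1 N, Δ n ≤ ∑' n, Δ (n + 1) := by
      rw [sum_Icc_one_eq_sum_range Δ]
      exact Summable.sum_le_tsum _ (fun k _ => hΔ (k + 1) (by omega)) hΔsum
    have h1 := part1 N hN
    rw [heq] at h1
    rw [le_div_iff₀ hc, mul_comm]
    have : (m : ℝ) * ∑ n ∈ Finset.Icc 1 N, Δ n ≤ (m : ℝ) * ∑' n, Δ (n + 1) :=
      mul_le_mul_of_nonneg_left hΔle (Nat.cast_nonneg m)
    linarith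
  have hasum : Summable a := summable_of_sum_range_le ha_nonneg hbound
  have haten : Filter.Tendsto a Filter.atTop (nhds 0) := hasum.tendsto_atTop_zero
  intro i
  have hφten : Filter.Tendsto (fun n => φ (dist (θ n i) (θ (n + 1) i)))
      Filter.atTop (nhds 0) := by
    refine squeeze_zero (fun n => hφnn _ dist_nonneg) (fun n => ?_) haten
    exact Finset.single_le_sum (fun j _ => hφnn _ dist_nonneg) (Finset.mem_univ i)
  rw [Metric.tendsto_atTop]
  intro ε hε
  have hφε : 0 < φ ε := by
    rw [← hφ0]
    exact hφ Set.self_mem_Ici hε.le hε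
  have := (tendsto_order.1 hφten).2 (φ ε) hφε
  rcases Filter.eventually_atTop.1 this with ⟨N, hNlt⟩
  refine ⟨N, fun n hn => ?_⟩
  rw [Real.dist_eq, sub_zero, abs_of_nonneg dist_nonneg]
  by_contra hcon
  push_neg at hcon
  exact absurd (hφ.monotoneOn hε.le (le_trans hε.le hcon) hcon) (not_le.2 (hNlt n hn))
end

section
/- Suppose (θ_n)_{n≥1} is a BMM sequence with Euclidean proximal surrogates, i.e. g_n^i(θ) = f_n^i(θ) + (λ_n/2)‖θ − θ_{n−1}^i‖² for all n, i, where L_f ≤ λ_n ≤ Λ for a fixed constant Λ < ∞. Assume Σ_{n≥1} Δ_n < ∞, the sublevel set {θ ∈ Θ : f(θ) ≤ a} is compact for every a ∈ ℝ, each g_n^i attains its minimum over Θ_i at some θ_n^{i⋆} ∈ Θ_i, and ‖θ_n^{i⋆} − θ_n^i‖ → 0 as n → ∞. Then every limit point of (θ_n)_{n≥0} is a stationary point of f over Θ. -/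
open Filter RealInnerProductSpace

/-- The `i`-th block partial gradient `∇_i f(x)`: the gradient at `x i` of the map
`u ↦ f (x with i-th block replaced by u)`. -/
noncomputable def gradi {m : ℕ} {E : Fin m → Type*} [∀ i, NormedAddCommGroup (E i)]
    [∀ i, InnerProductSpace ℝ (E i)] [∀ i, CompleteSpace (E i)]
    (f : (∀ i, E i) → ℝ) (x : ∀ i, E i) (i : Fin m) : E i :=
  gradient (fun u => f (Function.update x i u)) (x i)

open Topology

/-!
The proximal term makes each block update decrease `f` by `(λ_n/2)‖θ_n^i - θ_{n-1}^i‖²` up to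
`Δ_n`, so, `f` being bounded below and `Σ Δ_n` finite, the squared steps are summable and
`θ_n - θ_{n-1} → 0`. Along a subsequence `θ_{ψ k} → θ̄`, the previous iterates and the exact
minimizers `θ_{ψ k}^{i⋆}` therefore also tend to `θ̄`, and so do the points at which the
`i`-th marginal objective is evaluated. The first-order condition for the minimizer of the
proximal surrogate on the convex set `Θ_i`,
`0 ≤ ⟪∇_i f, u - θ^{i⋆}⟫ + λ ⟪θ^{i⋆} - θ_{n-1}^i, u - θ^{i⋆}⟫`, passes to the limit because
`∇_i f` is continuous and `λ_n` is bounded, and becomes stationarity at `θ̄`.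
-/

section FirstOrder

variable {F : Type*} [NormedAddCommGroup F] [InnerProductSpace ℝ F]

theorem inner_gradient_add_inner_nonneg_of_isMinOn_prox [CompleteSpace F] {C : Set F}
    (hC : Convex ℝ C) {g : F → ℝ} {s c u : F} {lam : ℝ} (hg : DifferentiableAt ℝ g s)
    (hs : s ∈ C) (hu : u ∈ C) (hmin : IsMinOn (fun v => g v + lam / 2 * ‖v - c‖ ^ 2) C s) :
    0 ≤ ⟪gradient g s, u - s⟫ + lam * ⟪s - c, u - s⟫ := by
  have hderiv := hg.hasGradientAt.hasFDerivAt.add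
    (((hasFDerivAt_id s).sub_const c).norm_sq.const_mul (lam / 2))
  have h := hmin.localize.hasFDerivWithinAt_nonneg hderiv.hasFDerivWithinAt
    (sub_mem_posTangentConeAt_of_segment_subset (hC.segment_subset hs hu))
  simp only [add_apply, smul_apply, ContinuousLinearMap.comp_apply, ContinuousLinearMap.id_apply,
    innerSL_apply_apply, InnerProductSpace.toDual_apply_apply, id, smul_eq_mul, nsmul_eq_mul] at h
  linarith

theorem inner_nonneg_of_tendsto_prox_optimality {ι : Type*} {l : Filter ι} [l.NeBot]
    {G s c : ι → F} {lam : ι → ℝ} {g a u : F} {b B : ℝ}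
    (hG : Tendsto G l (𝓝 g)) (hs : Tendsto s l (𝓝 a)) (hc : Tendsto c l (𝓝 a))
    (hb : ∀ᶠ k in l, b ≤ lam k) (hB : ∀ᶠ k in l, lam k ≤ B)
    (hopt : ∀ᶠ k in l, 0 ≤ ⟪G k, u - s k⟫ + lam k * ⟪s k - c k, u - s k⟫) :
    0 ≤ ⟪g, u - a⟫ := by
  have hprox : Tendsto (fun k => ⟪s k - c k, u - s k⟫) l (𝓝 0) := by
    simpa using (hs.sub hc).inner (tendsto_const_nhds.sub hs)
  refine ge_of_tendsto ?_ hopt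
  simpa using (hG.inner (tendsto_const_nhds.sub hs)).add (bdd_le_mul_tendsto_zero hb hB hprox)

end FirstOrder

section BlockUpdates

variable {m : ℕ} {X : Fin m → Type*}

def cyclePt (θ : ℕ → ∀ i, X i) (n k : ℕ) : ∀ j, X j :=
  fun j => if (j : ℕ) < k then θ n j else θ (n - 1) j

theorem cyclePt_zero (θ : ℕ → ∀ i, X i) (n : ℕ) : cyclePt θ n 0 = θ (n - 1) := by
  funext j
  simp [cyclePt]

theorem cyclePt_self (θ : ℕ → ∀ i, X i) (n : ℕ) : cyclePt θ n m = θ n := by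
  funext j
  simp [cyclePt, j.isLt]

theorem mixPt_prev (θ : ℕ → ∀ i, X i) (n : ℕ) (i : Fin m) :
    mixPt θ n i (θ (n - 1) i) = cyclePt θ n i := by
  funext j
  rcases eq_or_ne j i with rfl | hj
  · simp [mixPt, cyclePt]
  · simp [mixPt, cyclePt, hj]

theorem mixPt_self (θ : ℕ → ∀ i, X i) (n : ℕ) (i : Fin m) :
    mixPt θ n i (θ n i) = cyclePt θ n ((i : ℕ) + 1) := by
  funext j
  rcases eq_or_ne j i with rfl | hj
  · simp [mixPt, cyclePt]
  · have hlt : (j : ℕ) < i + 1 ↔ (j : ℕ) < i := by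
      have := Fin.val_ne_of_ne hj
      omega
    simp [mixPt, cyclePt, hj, hlt]

theorem add_sum_le_of_blockwise_decrease (f : (∀ i, X i) → ℝ) (θ : ℕ → ∀ i, X i) (n : ℕ)
    (c : Fin m → ℝ) (Δ : ℝ)
    (h : ∀ i, f (mixPt θ n i (θ n i)) + c i ≤ f (mixPt θ n i (θ (n - 1) i)) + Δ) :
    f (θ n) + ∑ i, c i ≤ f (θ (n - 1)) + m * Δ := by
  have htelescope : ∑ i : Fin m, (f (cyclePt θ n i) - f (cyclePt θ n ((i : ℕ) + 1)))
      = f (θ (n - 1)) - f (θ n) := by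
    rw [Fin.sum_univ_eq_sum_range (fun k => f (cyclePt θ n k) - f (cyclePt θ n (k + 1))),
      Finset.sum_range_sub', cyclePt_zero, cyclePt_self]
  have hsum : ∑ i : Fin m, (c i - Δ)
      ≤ ∑ i : Fin m, (f (cyclePt θ n i) - f (cyclePt θ n ((i : ℕ) + 1))) :=
    Finset.sum_le_sum fun i _ => by
      have hi := h i
      rw [mixPt_self, mixPt_prev] at hi
      linarith
  rw [htelescope, Finset.sum_sub_distrib, Finset.sum_const, Finset.card_univ, Fintype.card_fin,
    nsmul_eq_mul] at hsum
  linarith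

theorem tendsto_mixPt [∀ i, TopologicalSpace (X i)] {ι : Type*} {l : Filter ι}
    {θ : ℕ → ∀ i, X i} {ψ : ι → ℕ} {a : ∀ i, X i} (i : Fin m) {v : ι → X i}
    (hcur : Tendsto (fun k => θ (ψ k)) l (𝓝 a)) (hprev : Tendsto (fun k => θ (ψ k - 1)) l (𝓝 a))
    (hv : Tendsto v l (𝓝 (a i))) :
    Tendsto (fun k => mixPt θ (ψ k) i (v k)) l (𝓝 a) := by
  have hbase : Tendsto (fun k => cyclePt θ (ψ k) i) l (𝓝 a) := tendsto_pi_nhds.2 fun j => by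
    unfold cyclePt
    split_ifs
    exacts [tendsto_pi_nhds.1 hcur j, tendsto_pi_nhds.1 hprev j]
  have hupd := hbase.update i hv
  rwa [Function.update_eq_self] at hupd

end BlockUpdates

theorem summable_of_mul_le_sub_add {a F b : ℕ → ℝ} {c C : ℝ} (hc : 0 < c) (ha : ∀ n, 0 ≤ a n)
    (hb : ∀ n, 0 ≤ b n) (hbs : Summable b) (hF : ∀ n, C ≤ F n)
    (h : ∀ n, c * a n ≤ F n - F (n + 1) + b n) : Summable a := by
  refine summable_of_sum_range_le ha (c := (F 0 - C + ∑' n, b n) / c) fun N => ?_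
  rw [le_div_iff₀' hc, Finset.mul_sum]
  calc ∑ n ∈ Finset.range N, c * a n
      ≤ ∑ n ∈ Finset.range N, (F n - F (n + 1) + b n) := Finset.sum_le_sum fun n _ => h n
    _ = F 0 - F N + ∑ n ∈ Finset.range N, b n := by
      rw [Finset.sum_add_distrib, Finset.sum_range_sub']
    _ ≤ F 0 - C + ∑' n, b n := by
      linarith [hF N, hbs.sum_le_tsum (Finset.range N) fun n _ => hb n]

section PartialGradient

variable {m : ℕ} {E : Fin m → Type*} [∀ i, NormedAddCommGroup (E i)]
  [∀ i, InnerProductSpace ℝ (E i)] [∀ i, CompleteSpace (E i)]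

theorem gradi_update (f : (∀ i, E i) → ℝ) (x : ∀ i, E i) (i : Fin m) (v : E i) :
    gradi f (Function.update x i v) i = gradient (fun w => f (Function.update x i w)) v := by
  simp only [gradi, Function.update_idem, Function.update_self]

theorem continuous_gradi {f : (∀ i, E i) → ℝ} {L : ℝ}
    (hL : ∀ x y : ∀ i, E i,
      √(∑ i, ‖gradi f x i - gradi f y i‖ ^ 2) ≤ L * √(∑ i, ‖x i - y i‖ ^ 2))
    (i : Fin m) : Continuous fun x => gradi f x i := by
  refine continuous_iff_continuousAt.2 fun x => tendsto_iff_norm_sub_tendsto_zero.2 ?_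
  have hbound : Tendsto (fun y : ∀ i, E i => L * √(∑ j, ‖y j - x j‖ ^ 2)) (𝓝 x) (𝓝 0) := by
    have hcont : Continuous fun y : ∀ i, E i => L * √(∑ j, ‖y j - x j‖ ^ 2) := by fun_prop
    simpa using hcont.tendsto x
  refine squeeze_zero (fun _ => norm_nonneg _) (fun y => ?_) hbound
  refine le_trans ?_ (hL y x)
  exact Real.le_sqrt_of_sq_le (Finset.single_le_sum (f := fun j => ‖gradi f y j - gradi f x j‖ ^ 2)
    (fun j _ => sq_nonneg _) (Finset.mem_univ i))

end PartialGradient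

section Proximal

variable {m : ℕ} {E : Fin m → Type*} [∀ i, NormedAddCommGroup (E i)]
  {Θ : ∀ i, Set (E i)} {f : (∀ i, E i) → ℝ}
  {θ : ℕ → ∀ i, E i} {lam : ℕ → ℝ}

theorem tendsto_sub_prev_of_proximal {Lf fstar : ℝ} {Δ : ℕ → ℝ} (hLf : 0 < Lf)
    (hbdd : ∀ x, fstar ≤ f x) (hθ : ∀ n i, θ n i ∈ Θ i) (hlam : ∀ n, 1 ≤ n → Lf ≤ lam n)
    (hΔ : ∀ n, 1 ≤ n → 0 ≤ Δ n) (hΔsum : Summable fun n => Δ (n + 1))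
    (hopt : ∀ n, 1 ≤ n → ∀ i, ∀ v ∈ Θ i,
      f (mixPt θ n i (θ n i)) + lam n / 2 * ‖θ n i - θ (n - 1) i‖ ^ 2
        ≤ f (mixPt θ n i v) + lam n / 2 * ‖v - θ (n - 1) i‖ ^ 2 + Δ n)
    (j : Fin m) : Tendsto (fun n => θ n j - θ (n - 1) j) atTop (𝓝 0) := by
  set D : ℕ → ℝ := fun n => ∑ i, ‖θ (n + 1) i - θ n i‖ ^ 2
  have hD : ∀ n, 0 ≤ D n := fun n => by positivity
  have hdecrease : ∀ n, Lf / 2 * D n ≤ f (θ n) - f (θ (n + 1)) + m * Δ (n + 1) := by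
    intro n
    have hdesc := add_sum_le_of_blockwise_decrease f θ (n + 1)
      (fun i => lam (n + 1) / 2 * ‖θ (n + 1) i - θ n i‖ ^ 2) (Δ (n + 1))
      fun i => by simpa using hopt (n + 1) n.succ_pos i _ (hθ n i)
    rw [← Finset.mul_sum] at hdesc
    have hlamD := mul_le_mul_of_nonneg_right (hlam (n + 1) n.succ_pos) (hD n)
    simp only [Nat.add_sub_cancel] at hdesc
    linarith
  have hsummable : Summable D := summable_of_mul_le_sub_add (half_pos hLf) hD
    (fun n => mul_nonneg m.cast_nonneg (hΔ (n + 1) n.succ_pos)) (hΔsum.mul_left (m : ℝ))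
    (fun n => hbdd (θ n)) hdecrease
  have hsq : Tendsto (fun n => ‖θ (n + 1) j - θ n j‖ ^ 2) atTop (𝓝 0) :=
    squeeze_zero (fun n => sq_nonneg _) (fun n => Finset.single_le_sum
      (f := fun i => ‖θ (n + 1) i - θ n i‖ ^ 2) (fun i _ => sq_nonneg _) (Finset.mem_univ j))
      hsummable.tendsto_atTop_zero
  rw [← tendsto_add_atTop_iff_nat 1, tendsto_zero_iff_norm_tendsto_zero]
  simpa using hsq.sqrt

theorem inner_gradi_prox_nonneg [∀ i, InnerProductSpace ℝ (E i)] [∀ i, CompleteSpace (E i)]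
    (hconv : ∀ i, Convex ℝ (Θ i))
    (hdiff : Differentiable ℝ f) {θstar : ℕ → ∀ i, E i} {n : ℕ} {i : Fin m}
    (hstarmem : θstar n i ∈ Θ i)
    (hstarmin : ∀ v ∈ Θ i,
      f (mixPt θ n i (θstar n i)) + lam n / 2 * ‖θstar n i - θ (n - 1) i‖ ^ 2
        ≤ f (mixPt θ n i v) + lam n / 2 * ‖v - θ (n - 1) i‖ ^ 2)
    {u : E i} (hu : u ∈ Θ i) :
    0 ≤ ⟪gradi f (mixPt θ n i (θstar n i)) i, u - θstar n i⟫
      + lam n * ⟪θstar n i - θ (n - 1) i, u - θstar n i⟫ := by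
  rw [mixPt, gradi_update]
  exact inner_gradient_add_inner_nonneg_of_isMinOn_prox (hconv i)
    (hdiff.differentiableAt.comp _ (hasFDerivAt_update _ _).differentiableAt) hstarmem hu
    hstarmin

end Proximal

theorem bmm_proximal_limit_points_stationary_general {m : ℕ}
    {E : Fin m → Type*} [∀ i, NormedAddCommGroup (E i)]
    [∀ i, InnerProductSpace ℝ (E i)] [∀ i, FiniteDimensional ℝ (E i)]
    (Θ : ∀ i, Set (E i))
    (hclosed : ∀ i, IsClosed (Θ i)) (hconv : ∀ i, Convex ℝ (Θ i))
    (f : (∀ i, E i) → ℝ) (Lf : ℝ) (hLf : 0 < Lf)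
    (hdiff : Differentiable ℝ f)
    (hsmooth : ∀ x y : ∀ i, E i,
      Real.sqrt (∑ i, ‖gradi f x i - gradi f y i‖ ^ 2)
        ≤ Lf * Real.sqrt (∑ i, ‖x i - y i‖ ^ 2))
    (fstar : ℝ) (hbdd : ∀ x, fstar ≤ f x)
    (θ : ℕ → ∀ i, E i) (hθ : ∀ n i, θ n i ∈ Θ i)
    (lam : ℕ → ℝ) (Λbd : ℝ) (hlam : ∀ n, 1 ≤ n → Lf ≤ lam n ∧ lam n ≤ Λbd)
    (Δ : ℕ → ℝ) (hΔ : ∀ n, 1 ≤ n → 0 ≤ Δ n)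
    (hopt : ∀ n, 1 ≤ n → ∀ i, ∀ v ∈ Θ i,
      f (mixPt θ n i (θ n i)) + lam n / 2 * ‖θ n i - θ (n - 1) i‖ ^ 2
        ≤ f (mixPt θ n i v) + lam n / 2 * ‖v - θ (n - 1) i‖ ^ 2 + Δ n)
    (hΔsum : Summable fun n => Δ (n + 1))
    (θstar : ℕ → ∀ i, E i)
    (hstarmem : ∀ n, 1 ≤ n → ∀ i, θstar n i ∈ Θ i)
    (hstarmin : ∀ n, 1 ≤ n → ∀ i, ∀ v ∈ Θ i,
      f (mixPt θ n i (θstar n i)) + lam n / 2 * ‖θstar n i - θ (n - 1) i‖ ^ 2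
        ≤ f (mixPt θ n i v) + lam n / 2 * ‖v - θ (n - 1) i‖ ^ 2)
    (hstarclose : ∀ i, Tendsto (fun n => ‖θstar n i - θ n i‖) atTop (nhds 0)) :
    ∀ θbar : ∀ i, E i, MapClusterPt θbar atTop θ →
      (∀ i, θbar i ∈ Θ i) ∧ ∀ i, ∀ u ∈ Θ i, 0 ≤ ⟪gradi f θbar i, u - θbar i⟫ := by
  intro θbar hcluster
  obtain ⟨ψ, hψmono, hψ⟩ := hcluster.tendsto_subseq
  have hψtop := hψmono.tendsto_atTop
  have hcur : ∀ j, Tendsto (fun k => θ (ψ k) j) atTop (𝓝 (θbar j)) := tendsto_pi_nhds.1 hψ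
  refine ⟨fun j => (hclosed j).mem_of_tendsto (hcur j) (.of_forall fun k => hθ _ j),
    fun i u hu => ?_⟩
  have hsteps := tendsto_sub_prev_of_proximal hLf hbdd hθ (fun n hn => (hlam n hn).1) hΔ hΔsum
    hopt
  have hprev : Tendsto (fun k => θ (ψ k - 1)) atTop (𝓝 θbar) := tendsto_pi_nhds.2 fun j => by
    simpa using (hcur j).sub ((hsteps j).comp hψtop)
  have hstar : Tendsto (fun k => θstar (ψ k) i) atTop (𝓝 (θbar i)) := by
    simpa using ((tendsto_zero_iff_norm_tendsto_zero.2 (hstarclose i)).comp hψtop).add (hcur i)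
  have hψ1 : ∀ᶠ k in atTop, 1 ≤ ψ k := hψtop.eventually_ge_atTop 1
  refine inner_nonneg_of_tendsto_prox_optimality
    (((continuous_gradi hsmooth i).tendsto θbar).comp (tendsto_mixPt (ψ := ψ) i hψ hprev hstar))
    hstar (tendsto_pi_nhds.1 hprev i) (hψ1.mono fun k hk => (hlam _ hk).1)
    (hψ1.mono fun k hk => (hlam _ hk).2) (hψ1.mono fun k hk => ?_)
  exact inner_gradi_prox_nonneg hconv hdiff (hstarmem _ hk i) (hstarmin _ hk i) hu

/-- asymptotic convergence to stationary points for BMM with Euclidean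
proximal surrogates `g_n^i(θ) = f_n^i(θ) + (λ_n/2)‖θ - θ_{n-1}^i‖²`, `L_f ≤ λ_n ≤ Λ`.
Under summable optimality gaps, compact sublevel sets and exact minimizers `θ_n^{i⋆}` with
`‖θ_n^{i⋆} - θ_n^i‖ → 0`, every limit point of `(θ_n)` is a stationary point of `f` over
`Θ`. -/
theorem bmm_proximal_limit_points_stationary {m : ℕ} (hm : 1 ≤ m)
    {E : Fin m → Type*} [∀ i, NormedAddCommGroup (E i)]
    [∀ i, InnerProductSpace ℝ (E i)] [∀ i, FiniteDimensional ℝ (E i)]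
    (Θ : ∀ i, Set (E i)) (hne : ∀ i, (Θ i).Nonempty)
    (hclosed : ∀ i, IsClosed (Θ i)) (hconv : ∀ i, Convex ℝ (Θ i))
    (f : (∀ i, E i) → ℝ) (Lf : ℝ) (hLf : 0 < Lf)
    (hdiff : Differentiable ℝ f)
    (hsmooth : ∀ x y : ∀ i, E i,
      Real.sqrt (∑ i, ‖gradi f x i - gradi f y i‖ ^ 2)
        ≤ Lf * Real.sqrt (∑ i, ‖x i - y i‖ ^ 2))
    (fstar : ℝ) (hbdd : ∀ x, fstar ≤ f x)
    (θ : ℕ → ∀ i, E i) (hθ : ∀ n i, θ n i ∈ Θ i)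
    (lam : ℕ → ℝ) (Λbd : ℝ) (hlam : ∀ n, 1 ≤ n → Lf ≤ lam n ∧ lam n ≤ Λbd)
    (Δ : ℕ → ℝ) (hΔ : ∀ n, 1 ≤ n → 0 ≤ Δ n)
    (hopt : ∀ n, 1 ≤ n → ∀ i, ∀ v ∈ Θ i,
      f (mixPt θ n i (θ n i)) + lam n / 2 * ‖θ n i - θ (n - 1) i‖ ^ 2
        ≤ f (mixPt θ n i v) + lam n / 2 * ‖v - θ (n - 1) i‖ ^ 2 + Δ n)
    (hΔsum : Summable fun n => Δ (n + 1))
    (hcompact : ∀ a : ℝ, IsCompact {x : ∀ i, E i | (∀ i, x i ∈ Θ i) ∧ f x ≤ a})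
    (θstar : ℕ → ∀ i, E i)
    (hstarmem : ∀ n, 1 ≤ n → ∀ i, θstar n i ∈ Θ i)
    (hstarmin : ∀ n, 1 ≤ n → ∀ i, ∀ v ∈ Θ i,
      f (mixPt θ n i (θstar n i)) + lam n / 2 * ‖θstar n i - θ (n - 1) i‖ ^ 2
        ≤ f (mixPt θ n i v) + lam n / 2 * ‖v - θ (n - 1) i‖ ^ 2)
    (hstarclose : ∀ i, Tendsto (fun n => ‖θstar n i - θ n i‖) atTop (nhds 0)) :
    ∀ θbar : ∀ i, E i, MapClusterPt θbar atTop θ →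
      (∀ i, θbar i ∈ Θ i) ∧ ∀ i, ∀ u ∈ Θ i, 0 ≤ ⟪gradi f θbar i, u - θbar i⟫ :=
  bmm_proximal_limit_points_stationary_general Θ hclosed hconv f Lf hLf hdiff hsmooth fstar hbdd θ
    hθ lam Λbd hlam Δ hΔ hopt hΔsum θstar hstarmem hstarmin hstarclose
end

section
/- Suppose (θ_n)_{n≥1} is a BMM sequence with Euclidean proximal surrogates, i.e. g_n^i(θ) = f_n^i(θ) + (λ_n/2)‖θ − θ_{n−1}^i‖² for all n, i, where L_f ≤ λ_n ≤ Λ for a fixed constant Λ < ∞, and assume Σ_{n≥1} Δ_n < ∞. Then there is a constant C > 0, depending only on m, L_f and Λ, such that for every n ≥ 2: min_{1≤k≤n} S(θ_k) ≤ C·( f(θ_0) − f* + 1 + Σ_{j=1}^∞ Δ_j )·(log n)/√n. In particular the stationarity measure along the iterates decays at rate Õ(n^{−1/2}), which yields worst-case iteration complexity O(ε^{−2}(log ε^{−2})²) for reaching an ε-stationary point. -/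
open Filter RealInnerProductSpace

universe u

/-- The stationarity measure
`S(x) = ∑_i sup { ⟪-∇_i f(x), u⟫ : ‖u‖ ≤ 1, x i + u ∈ Θ i }`. -/
noncomputable def Smeasure {m : ℕ} {E : Fin m → Type*} [∀ i, NormedAddCommGroup (E i)]
    [∀ i, InnerProductSpace ℝ (E i)] [∀ i, CompleteSpace (E i)]
    (f : (∀ i, E i) → ℝ) (Θ : ∀ i, Set (E i)) (x : ∀ i, E i) : ℝ :=
  ∑ i, sSup ((fun u => ⟪-gradi f x i, u⟫) '' {u : E i | ‖u‖ ≤ 1 ∧ x i + u ∈ Θ i})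

/-!
Testing the approximate optimality of `θ n i` against the previous block `θ (n-1) i` gives,
because `λ_n ≥ L_f`, the sufficient decrease
`f (θ n) + L_f/2 ‖θ n - θ (n-1)‖² ≤ f (θ (n-1)) + m Δ_n`, so the squared steps are summable.
Testing it instead against `θ n i + t u` and using the descent lemma bounds each block of
`S (θ n)` by `(L_f + Λ) (t/2 + ‖θ n - θ (n-1)‖) + Δ_n / t`: the block gradient is taken at the
partially updated point, which lies within `‖θ n - θ (n-1)‖` of `θ n`. With `t = n^{-1/2}`,
averaging over `k ≤ n` and Cauchy–Schwarz on the steps give `min_k S (θ k) = O(n^{-1/2})`;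
the factor `log n / log 2 ≥ 1` is slack.
-/

section Descent

variable {F : Type*} [NormedAddCommGroup F] [InnerProductSpace ℝ F] [CompleteSpace F]
  {f : F → ℝ} {L : ℝ}

theorem hasDerivAt_comp_add_smul (hf : Differentiable ℝ f) (x u : F) (t : ℝ) :
    HasDerivAt (fun s : ℝ => f (x + s • u)) ⟪gradient f (x + t • u), u⟫ t := by
  have hline : HasDerivAt (fun s : ℝ => x + s • u) u t := by
    simpa using ((hasDerivAt_id t).smul_const u).const_add x
  have hcomp := (hasGradientAt_iff_hasFDerivAt.mp (hf (x + t • u)).hasGradientAt).comp_hasDerivAt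
    t hline
  rwa [InnerProductSpace.toDual_apply_apply] at hcomp

theorem apply_add_le_of_norm_gradient_sub_le (hf : Differentiable ℝ f)
    (hL : ∀ a b, ‖gradient f a - gradient f b‖ ≤ L * ‖a - b‖) (x u : F) :
    f (x + u) ≤ f x + ⟪gradient f x, u⟫ + L / 2 * ‖u‖ ^ 2 := by
  set ψ : ℝ → ℝ := fun t => f (x + t • u) - t * ⟪gradient f x, u⟫ - L / 2 * t ^ 2 * ‖u‖ ^ 2
  have hψ (t : ℝ) : HasDerivAt ψ
      (⟪gradient f (x + t • u), u⟫ - ⟪gradient f x, u⟫ - L * t * ‖u‖ ^ 2) t := by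
    have hquad : HasDerivAt (fun t : ℝ => L / 2 * t ^ 2 * ‖u‖ ^ 2) (L * t * ‖u‖ ^ 2) t :=
      ((hasDerivAt_pow 2 t).const_mul (L / 2)).mul_const (‖u‖ ^ 2) |>.congr_deriv
        (by simp only [Nat.cast_ofNat, pow_one, Nat.add_one_sub_one]; ring)
    exact ((hasDerivAt_comp_add_smul hf x u t).sub
      ((hasDerivAt_id t).mul_const _)).sub hquad |>.congr_deriv (by simp)
  have hanti : AntitoneOn ψ (Set.Icc 0 1) := by
    refine antitoneOn_of_deriv_nonpos (convex_Icc 0 1)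
      (fun t _ => (hψ t).continuousAt.continuousWithinAt)
      (fun t _ => (hψ t).differentiableAt.differentiableWithinAt) fun t ht => ?_
    rw [interior_Icc] at ht
    rw [(hψ t).deriv, ← inner_sub_left]
    have hgrad : ‖gradient f (x + t • u) - gradient f x‖ ≤ L * (t * ‖u‖) := by
      simpa [norm_smul, abs_of_pos ht.1] using hL (x + t • u) x
    nlinarith [real_inner_le_norm (gradient f (x + t • u) - gradient f x) u,
      mul_le_mul_of_nonneg_right hgrad (norm_nonneg u)]
  have h01 := hanti (Set.left_mem_Icc.2 zero_le_one) (Set.right_mem_Icc.2 zero_le_one) zero_le_one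
  simp only [ψ, one_smul, zero_smul, add_zero] at h01
  linarith

theorem neg_inner_gradient_le_of_approx_prox_min {C : Set F} (hC : Convex ℝ C)
    (hf : Differentiable ℝ f) (hL0 : 0 ≤ L)
    (hL : ∀ a b, ‖gradient f a - gradient f b‖ ≤ L * ‖a - b‖) {w w₀ u : F} {lam Δ t : ℝ}
    (hlam : 0 ≤ lam) (hw : w ∈ C)
    (hmin : ∀ v ∈ C, f w + lam / 2 * ‖w - w₀‖ ^ 2 ≤ f v + lam / 2 * ‖v - w₀‖ ^ 2 + Δ)
    (hu : w + u ∈ C) (hu1 : ‖u‖ ≤ 1) (ht0 : 0 < t) (ht1 : t ≤ 1) :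
    -⟪gradient f w, u⟫ ≤ (L + lam) * t / 2 + Δ / t + lam * ‖w - w₀‖ := by
  have hdesc := apply_add_le_of_norm_gradient_sub_le hf hL w (t • u)
  have hprox := hmin _ (hC.add_smul_mem hw hu ⟨ht0.le, ht1⟩)
  have hexpand : ‖w + t • u - w₀‖ ^ 2 = ‖w - w₀‖ ^ 2 + 2 * (t * ⟪w - w₀, u⟫) + t ^ 2 * ‖u‖ ^ 2 := by
    rw [add_sub_right_comm, norm_add_sq_real, real_inner_smul_right, norm_smul,
      Real.norm_eq_abs, mul_pow, sq_abs]
  rw [real_inner_smul_right, norm_smul, Real.norm_eq_abs, mul_pow, sq_abs] at hdesc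
  have hsq : (L + lam) * t ^ 2 * ‖u‖ ^ 2 ≤ (L + lam) * t ^ 2 := by
    have : ‖u‖ ^ 2 ≤ 1 := pow_le_one₀ (norm_nonneg u) hu1
    nlinarith [mul_nonneg (add_nonneg hL0 hlam) (sq_nonneg t)]
  have hcs : ⟪w - w₀, u⟫ ≤ ‖w - w₀‖ :=
    (real_inner_le_norm _ _).trans (mul_le_of_le_one_right (norm_nonneg _) hu1)
  have hscaled : t * -⟪gradient f w, u⟫ ≤ t * ((L + lam) * t / 2 + lam * ‖w - w₀‖) + Δ := by
    nlinarith [mul_le_mul_of_nonneg_left hcs (mul_nonneg hlam ht0.le)]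
  calc -⟪gradient f w, u⟫ = t * -⟪gradient f w, u⟫ / t := by field_simp
    _ ≤ (t * ((L + lam) * t / 2 + lam * ‖w - w₀‖) + Δ) / t := by gcongr
    _ = (L + lam) * t / 2 + Δ / t + lam * ‖w - w₀‖ := by field_simp; ring

end Descent

section Blocks

theorem norm_toLp_update_sub_update {ι : Type*} [Fintype ι] [DecidableEq ι] {E : ι → Type*}
    [∀ i, SeminormedAddCommGroup (E i)] (x : ∀ i, E i) (i : ι) (w w' : E i) :
    ‖WithLp.toLp 2 (Function.update x i w - Function.update x i w')‖ = ‖w - w'‖ := by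
  have hsingle : Function.update x i w - Function.update x i w' = Pi.single i (w - w') := by
    ext j
    rcases eq_or_ne j i with rfl | hj
    · simp
    · simp [hj]
  rw [hsingle, PiLp.toLp_single, PiLp.norm_single]

theorem norm_toLp_sub_sq {ι : Type*} [Fintype ι] {E : ι → Type*}
    [∀ i, SeminormedAddCommGroup (E i)] (x y : ∀ i, E i) :
    ‖WithLp.toLp 2 (x - y)‖ ^ 2 = ∑ i, ‖x i - y i‖ ^ 2 :=
  PiLp.norm_sq_eq_of_L2 E _

theorem norm_toLp_sub {ι : Type*} [Fintype ι] {E : ι → Type*}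
    [∀ i, SeminormedAddCommGroup (E i)] (x y : ∀ i, E i) :
    ‖WithLp.toLp 2 (x - y)‖ = √(∑ i, ‖x i - y i‖ ^ 2) :=
  PiLp.norm_eq_of_L2 _

variable {m : ℕ} {E : Fin m → Type*} [∀ i, NormedAddCommGroup (E i)]
  [∀ i, InnerProductSpace ℝ (E i)] {f : (∀ i, E i) → ℝ}

theorem Differentiable.comp_update (hf : Differentiable ℝ f) (x : ∀ i, E i) (i : Fin m) :
    Differentiable ℝ fun v : E i => f (Function.update x i v) :=
  fun v => (hf _).comp v (hasFDerivAt_update x v).differentiableAt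

variable [∀ i, CompleteSpace (E i)] {L : ℝ}

theorem gradient_comp_update (f : (∀ i, E i) → ℝ) (x : ∀ i, E i) (i : Fin m) (w : E i) :
    gradient (fun v => f (Function.update x i v)) w = gradi f (Function.update x i w) i := by
  simp only [gradi, Function.update_idem, Function.update_self]

theorem norm_gradient_comp_update_sub_le
    (hL : ∀ x y, ‖WithLp.toLp 2 (gradi f x - gradi f y)‖ ≤ L * ‖WithLp.toLp 2 (x - y)‖)
    (x : ∀ i, E i) (i : Fin m) (a b : E i) :
    ‖gradient (fun v => f (Function.update x i v)) a
      - gradient (fun v => f (Function.update x i v)) b‖ ≤ L * ‖a - b‖ := by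
  rw [gradient_comp_update, gradient_comp_update, ← norm_toLp_update_sub_update x i a b]
  exact (PiLp.norm_apply_le _ i).trans (hL _ _)

end Blocks

section MixedPoints

variable {m : ℕ} {X : Fin m → Type*} (θ : ℕ → ∀ i, X i) (n : ℕ) (i : Fin m)

theorem mixPt_prev_s7 :
    mixPt θ n i (θ (n - 1) i) = fun j : Fin m => if (j : ℕ) < i then θ n j else θ (n - 1) j :=
  Function.update_eq_self_iff.2 (by simp)

theorem mixPt_cur :
    mixPt θ n i (θ n i) = fun j : Fin m => if (j : ℕ) < i + 1 then θ n j else θ (n - 1) j := by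
  funext j
  rcases eq_or_ne j i with rfl | hj
  · simp [mixPt]
  · have hj' : (j : ℕ) ≠ i := Fin.val_ne_of_ne hj
    simp only [mixPt, Function.update_of_ne hj]
    congr 1
    simp only [eq_iff_iff]
    omega

theorem sum_sub_mixPt (g : (∀ j, X j) → ℝ) :
    ∑ i, (g (mixPt θ n i (θ n i)) - g (mixPt θ n i (θ (n - 1) i))) = g (θ n) - g (θ (n - 1)) := by
  set Q : ℕ → ℝ := fun a => g fun j : Fin m => if (j : ℕ) < a then θ n j else θ (n - 1) j
  have hQm : Q m = g (θ n) := congrArg g (funext fun j => if_pos j.isLt)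
  have hQ0 : Q 0 = g (θ (n - 1)) := rfl
  simp only [mixPt_cur, mixPt_prev_s7]
  rw [Fin.sum_univ_eq_sum_range (fun a => Q (a + 1) - Q a), Finset.sum_range_sub, hQm, hQ0]

theorem norm_toLp_mixPt_sub_le [∀ i, SeminormedAddCommGroup (X i)] :
    ‖WithLp.toLp 2 (mixPt θ n i (θ n i) - θ n)‖ ≤ ‖WithLp.toLp 2 (θ n - θ (n - 1))‖ := by
  rw [norm_toLp_sub, norm_toLp_sub]
  refine Real.sqrt_le_sqrt (Finset.sum_le_sum fun j _ => ?_)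
  rw [mixPt_cur]
  dsimp only
  split_ifs
  · simp
  · rw [← norm_neg, neg_sub]

end MixedPoints

theorem sum_Icc_one_le_tsum_succ {a : ℕ → ℝ} (ha : ∀ n, 1 ≤ n → 0 ≤ a n)
    (hs : Summable fun n => a (n + 1)) (N : ℕ) :
    ∑ k ∈ Finset.Icc 1 N, a k ≤ ∑' j, a (j + 1) := by
  have hshift : ∑ k ∈ Finset.Icc 1 N, a k = ∑ j ∈ Finset.range N, a (j + 1) := by
    induction N with
    | zero => simp
    | succ N ih => rw [Finset.sum_Icc_succ_top (by omega), ih, Finset.sum_range_succ]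
  rw [hshift]
  exact Summable.sum_le_tsum _ (fun j _ => ha _ (by omega)) hs

structure IsProximalBMMSeq {m : ℕ} {E : Fin m → Type*} [∀ i, SeminormedAddCommGroup (E i)]
    (f : (∀ i, E i) → ℝ) (Θ : ∀ i, Set (E i)) (θ : ℕ → ∀ i, E i) (lam Δ : ℕ → ℝ) : Prop where
  mem : ∀ n i, θ n i ∈ Θ i
  approx_min : ∀ n, 1 ≤ n → ∀ i, ∀ v ∈ Θ i,
    f (mixPt θ n i (θ n i)) + lam n / 2 * ‖θ n i - θ (n - 1) i‖ ^ 2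
      ≤ f (mixPt θ n i v) + lam n / 2 * ‖v - θ (n - 1) i‖ ^ 2 + Δ n

namespace IsProximalBMMSeq

open Finset

section

variable {m : ℕ} {E : Fin m → Type*} [∀ i, SeminormedAddCommGroup (E i)]
  {f : (∀ i, E i) → ℝ} {Θ : ∀ i, Set (E i)} {θ : ℕ → ∀ i, E i} {lam Δ : ℕ → ℝ} {Lf : ℝ}

theorem sufficient_decrease (hθ : IsProximalBMMSeq f Θ θ lam Δ) {n : ℕ} (hn : 1 ≤ n)
    (hlam : Lf ≤ lam n) :
    f (θ n) + Lf / 2 * ‖WithLp.toLp 2 (θ n - θ (n - 1))‖ ^ 2 ≤ f (θ (n - 1)) + m * Δ n := by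
  have hblock (i : Fin m) : f (mixPt θ n i (θ n i)) - f (mixPt θ n i (θ (n - 1) i))
      + Lf / 2 * ‖θ n i - θ (n - 1) i‖ ^ 2 ≤ Δ n := by
    have hmin := hθ.approx_min n hn i _ (hθ.mem (n - 1) i)
    rw [sub_self, norm_zero] at hmin
    nlinarith [sq_nonneg ‖θ n i - θ (n - 1) i‖]
  have hsum := sum_le_sum fun i (_ : i ∈ univ) => hblock i
  rw [sum_add_distrib, sum_sub_mixPt, ← mul_sum, ← norm_toLp_sub_sq, sum_const, card_univ,
    Fintype.card_fin, nsmul_eq_mul] at hsum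
  linarith

theorem sum_sufficient_decrease (hθ : IsProximalBMMSeq f Θ θ lam Δ)
    (hlam : ∀ n, 1 ≤ n → Lf ≤ lam n) (N : ℕ) :
    f (θ N) + Lf / 2 * ∑ k ∈ Icc 1 N, ‖WithLp.toLp 2 (θ k - θ (k - 1))‖ ^ 2
      ≤ f (θ 0) + m * ∑ k ∈ Icc 1 N, Δ k := by
  induction N with
  | zero => simp
  | succ N ih =>
    have hstep := hθ.sufficient_decrease (n := N + 1) (by omega) (hlam _ (by omega))
    rw [sum_Icc_succ_top (by omega), sum_Icc_succ_top (by omega), mul_add, mul_add]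
    simp only [Nat.add_sub_cancel] at hstep ⊢
    linarith

theorem sum_sq_step_le (hθ : IsProximalBMMSeq f Θ θ lam Δ) (hLf : 0 < Lf) (hm : 1 ≤ m)
    (hlam : ∀ k, 1 ≤ k → Lf ≤ lam k) (hΔ : ∀ k, 1 ≤ k → 0 ≤ Δ k)
    (hΔs : Summable fun k => Δ (k + 1)) {fstar : ℝ} (hfstar : ∀ x, fstar ≤ f x) (n : ℕ) :
    ∑ k ∈ Icc 1 n, ‖WithLp.toLp 2 (θ k - θ (k - 1))‖ ^ 2
      ≤ 2 * (m / Lf) * (f (θ 0) - fstar + ∑' j, Δ (j + 1)) := by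
  have hΔn := sum_Icc_one_le_tsum_succ hΔ hΔs n
  have hmΔ := mul_le_mul_of_nonneg_left hΔn (by positivity : (0 : ℝ) ≤ m)
  have hma : f (θ 0) - fstar ≤ m * (f (θ 0) - fstar) :=
    le_mul_of_one_le_left (sub_nonneg.2 (hfstar _)) (by exact_mod_cast hm)
  have hcancel : Lf / 2 * (2 * (m / Lf) * (f (θ 0) - fstar + ∑' j, Δ (j + 1)))
      = m * (f (θ 0) - fstar + ∑' j, Δ (j + 1)) := by field_simp
  refine le_of_mul_le_mul_left ?_ (half_pos hLf)
  linarith [hθ.sum_sufficient_decrease hlam n, hfstar (θ n)]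

end

section

variable {m : ℕ} {E : Fin m → Type*} [∀ i, NormedAddCommGroup (E i)]
  [∀ i, InnerProductSpace ℝ (E i)] [∀ i, CompleteSpace (E i)]
  {f : (∀ i, E i) → ℝ} {Θ : ∀ i, Set (E i)} {θ : ℕ → ∀ i, E i} {lam Δ : ℕ → ℝ} {Lf Λ : ℝ}

theorem inner_neg_gradi_le (hθ : IsProximalBMMSeq f Θ θ lam Δ) (hΘ : ∀ i, Convex ℝ (Θ i))
    (hf : Differentiable ℝ f) (hLf : 0 ≤ Lf)
    (hL : ∀ x y, ‖WithLp.toLp 2 (gradi f x - gradi f y)‖ ≤ Lf * ‖WithLp.toLp 2 (x - y)‖)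
    {k : ℕ} (hk : 1 ≤ k) (hlam0 : 0 ≤ lam k) (hlamΛ : lam k ≤ Λ) (i : Fin m) {u : E i}
    (hu : θ k i + u ∈ Θ i) (hu1 : ‖u‖ ≤ 1) {t : ℝ} (ht0 : 0 < t) (ht1 : t ≤ 1) :
    ⟪-gradi f (θ k) i, u⟫ ≤ (Lf + Λ) * (t / 2 + ‖WithLp.toLp 2 (θ k - θ (k - 1))‖) + Δ k / t := by
  set x := mixPt θ k i (θ k i)
  set D := ‖WithLp.toLp 2 (θ k - θ (k - 1))‖
  have hprox : -⟪gradi f x i, u⟫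
      ≤ (Lf + lam k) * t / 2 + Δ k / t + lam k * ‖θ k i - θ (k - 1) i‖ := by
    have h := neg_inner_gradient_le_of_approx_prox_min (hΘ i) (hf.comp_update _ i) hLf
      (norm_gradient_comp_update_sub_le hL _ i) hlam0 (hθ.mem k i) (hθ.approx_min k hk i)
      hu hu1 ht0 ht1
    rwa [gradient_comp_update] at h
  have hcross : ⟪gradi f x i - gradi f (θ k) i, u⟫ ≤ Lf * D :=
    calc ⟪gradi f x i - gradi f (θ k) i, u⟫ ≤ ‖gradi f x i - gradi f (θ k) i‖ * ‖u‖ :=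
          real_inner_le_norm _ _
      _ ≤ ‖gradi f x i - gradi f (θ k) i‖ := mul_le_of_le_one_right (norm_nonneg _) hu1
      _ ≤ ‖WithLp.toLp 2 (gradi f x - gradi f (θ k))‖ :=
          PiLp.norm_apply_le (WithLp.toLp 2 (gradi f x - gradi f (θ k))) i
      _ ≤ Lf * ‖WithLp.toLp 2 (x - θ k)‖ := hL _ _
      _ ≤ Lf * D := mul_le_mul_of_nonneg_left (norm_toLp_mixPt_sub_le θ k i) hLf
  have hprev : lam k * ‖θ k i - θ (k - 1) i‖ ≤ Λ * D :=
    mul_le_mul hlamΛ (PiLp.norm_apply_le (WithLp.toLp 2 (θ k - θ (k - 1))) i) (norm_nonneg _)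
      (hlam0.trans hlamΛ)
  have hquad : (Lf + lam k) * t / 2 ≤ (Lf + Λ) * t / 2 := by gcongr
  rw [inner_sub_left] at hcross
  rw [inner_neg_left]
  linarith

theorem stationarity_le (hθ : IsProximalBMMSeq f Θ θ lam Δ) (hΘ : ∀ i, Convex ℝ (Θ i))
    (hf : Differentiable ℝ f) (hLf : 0 ≤ Lf)
    (hL : ∀ x y, ‖WithLp.toLp 2 (gradi f x - gradi f y)‖ ≤ Lf * ‖WithLp.toLp 2 (x - y)‖)
    {k : ℕ} (hk : 1 ≤ k) (hlam0 : 0 ≤ lam k) (hlamΛ : lam k ≤ Λ) {t : ℝ} (ht0 : 0 < t)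
    (ht1 : t ≤ 1) :
    Smeasure f Θ (θ k)
      ≤ m * ((Lf + Λ) * (t / 2 + ‖WithLp.toLp 2 (θ k - θ (k - 1))‖) + Δ k / t) := by
  calc Smeasure f Θ (θ k)
      ≤ ∑ _i : Fin m, ((Lf + Λ) * (t / 2 + ‖WithLp.toLp 2 (θ k - θ (k - 1))‖) + Δ k / t) := by
        refine sum_le_sum fun i _ => csSup_le ⟨_, 0, ⟨by simp, by simpa using hθ.mem k i⟩, rfl⟩ ?_
        rintro _ ⟨u, ⟨hu1, hu⟩, rfl⟩
        exact hθ.inner_neg_gradi_le hΘ hf hLf hL hk hlam0 hlamΛ i hu hu1 ht0 ht1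
    _ = _ := by rw [sum_const, card_univ, Fintype.card_fin, nsmul_eq_mul]

theorem sum_stationarity_le (hθ : IsProximalBMMSeq f Θ θ lam Δ) (hΘ : ∀ i, Convex ℝ (Θ i))
    (hf : Differentiable ℝ f) (hLf : 0 ≤ Lf)
    (hL : ∀ x y, ‖WithLp.toLp 2 (gradi f x - gradi f y)‖ ≤ Lf * ‖WithLp.toLp 2 (x - y)‖)
    (hlam : ∀ k, 1 ≤ k → Lf ≤ lam k ∧ lam k ≤ Λ) {n : ℕ} (hn : 1 ≤ n) :
    ∑ k ∈ Icc 1 n, Smeasure f Θ (θ k)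
      ≤ m * √n * ((Lf + Λ) * (1 / 2 + √(∑ k ∈ Icc 1 n, ‖WithLp.toLp 2 (θ k - θ (k - 1))‖ ^ 2))
        + ∑ k ∈ Icc 1 n, Δ k) := by
  set D : ℕ → ℝ := fun k => ‖WithLp.toLp 2 (θ k - θ (k - 1))‖
  set s := √(n : ℝ) with hs_def
  have hs : 1 ≤ s := Real.one_le_sqrt.2 (by exact_mod_cast hn)
  have hsq : (n : ℝ) = s ^ 2 := (Real.sq_sqrt (Nat.cast_nonneg n)).symm
  have hA : 0 ≤ Lf + Λ := by linarith [hlam 1 le_rfl]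
  have hterm : ∀ k ∈ Icc 1 n, Smeasure f Θ (θ k)
      ≤ m * ((Lf + Λ) * (s⁻¹ / 2 + D k) + Δ k * s) := fun k hk => by
    have hk1 := (mem_Icc.1 hk).1
    simpa only [div_inv_eq_mul] using hθ.stationarity_le hΘ hf hLf hL hk1
      (hLf.trans (hlam k hk1).1) (hlam k hk1).2 (by positivity) (inv_le_one_of_one_le₀ hs)
  have hCS : ∑ k ∈ Icc 1 n, D k ≤ s * √(∑ k ∈ Icc 1 n, D k ^ 2) := by
    simpa using Real.sum_mul_le_sqrt_mul_sqrt (Icc 1 n) (fun _ => 1) D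
  calc ∑ k ∈ Icc 1 n, Smeasure f Θ (θ k)
      ≤ ∑ k ∈ Icc 1 n, m * ((Lf + Λ) * (s⁻¹ / 2 + D k) + Δ k * s) := sum_le_sum hterm
    _ = m * ((Lf + Λ) * (n * s⁻¹ / 2 + ∑ k ∈ Icc 1 n, D k) + s * ∑ k ∈ Icc 1 n, Δ k) := by
      simp only [← mul_sum, sum_add_distrib, sum_const, Nat.card_Icc, ← sum_mul, nsmul_eq_mul]
      push_cast
      ring
    _ ≤ m * ((Lf + Λ) * (n * s⁻¹ / 2 + s * √(∑ k ∈ Icc 1 n, D k ^ 2))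
          + s * ∑ k ∈ Icc 1 n, Δ k) := by gcongr
    _ = m * s * ((Lf + Λ) * (1 / 2 + √(∑ k ∈ Icc 1 n, D k ^ 2)) + ∑ k ∈ Icc 1 n, Δ k) := by
      rw [hsq]
      field_simp

theorem sqrt_mul_inf'_stationarity_le (hθ : IsProximalBMMSeq f Θ θ lam Δ)
    (hΘ : ∀ i, Convex ℝ (Θ i)) (hf : Differentiable ℝ f) (hLf : 0 ≤ Lf)
    (hL : ∀ x y, ‖WithLp.toLp 2 (gradi f x - gradi f y)‖ ≤ Lf * ‖WithLp.toLp 2 (x - y)‖)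
    (hlam : ∀ k, 1 ≤ k → Lf ≤ lam k ∧ lam k ≤ Λ) {n : ℕ} (hne : (Icc 1 n).Nonempty) :
    √n * (Icc 1 n).inf' hne (fun k => Smeasure f Θ (θ k))
      ≤ m * ((Lf + Λ) * (1 / 2 + √(∑ k ∈ Icc 1 n, ‖WithLp.toLp 2 (θ k - θ (k - 1))‖ ^ 2))
        + ∑ k ∈ Icc 1 n, Δ k) := by
  have hn : 1 ≤ n := nonempty_Icc.1 hne
  have hinf : n * (Icc 1 n).inf' hne (fun k => Smeasure f Θ (θ k))
      ≤ ∑ k ∈ Icc 1 n, Smeasure f Θ (θ k) := by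
    simpa using card_nsmul_le_sum (Icc 1 n) (fun k => Smeasure f Θ (θ k)) _
      fun k hk => inf'_le (fun k => Smeasure f Θ (θ k)) hk
  have hs : 0 < √(n : ℝ) := Real.sqrt_pos.2 (by exact_mod_cast hn)
  refine le_of_mul_le_mul_left ?_ hs
  calc √n * (√n * (Icc 1 n).inf' hne (fun k => Smeasure f Θ (θ k)))
      = n * (Icc 1 n).inf' hne (fun k => Smeasure f Θ (θ k)) := by
        rw [← mul_assoc, Real.mul_self_sqrt (Nat.cast_nonneg n)]
    _ ≤ _ := hinf.trans (hθ.sum_stationarity_le hΘ hf hLf hL hlam hn)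
    _ = _ := by ring

theorem inf'_stationarity_le (hθ : IsProximalBMMSeq f Θ θ lam Δ) (hΘ : ∀ i, Convex ℝ (Θ i))
    (hf : Differentiable ℝ f) (hLf : 0 < Lf)
    (hL : ∀ x y, ‖WithLp.toLp 2 (gradi f x - gradi f y)‖ ≤ Lf * ‖WithLp.toLp 2 (x - y)‖)
    (hm : 1 ≤ m) (hlam : ∀ k, 1 ≤ k → Lf ≤ lam k ∧ lam k ≤ Λ) (hΔ : ∀ k, 1 ≤ k → 0 ≤ Δ k)
    (hΔs : Summable fun k => Δ (k + 1)) {fstar : ℝ} (hfstar : ∀ x, fstar ≤ f x) {n : ℕ}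
    (hne : (Icc 1 n).Nonempty) :
    (Icc 1 n).inf' hne (fun k => Smeasure f Θ (θ k))
      ≤ m * ((Lf + Λ) * (m / Lf + 1) + 1) * (f (θ 0) - fstar + 1 + ∑' j, Δ (j + 1)) / √n := by
  set SΔ := ∑' j, Δ (j + 1)
  set Q := ∑ k ∈ Icc 1 n, ‖WithLp.toLp 2 (θ k - θ (k - 1))‖ ^ 2
  set a := f (θ 0) - fstar
  have ha : 0 ≤ a := sub_nonneg.2 (hfstar _)
  have hΔn : ∑ k ∈ Icc 1 n, Δ k ≤ SΔ := sum_Icc_one_le_tsum_succ hΔ hΔs n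
  have hSΔ : 0 ≤ SΔ := tsum_nonneg fun j => hΔ (j + 1) (by omega)
  have hA : 0 ≤ Lf + Λ := by linarith [hlam 1 le_rfl]
  have hQ : Q ≤ 2 * (m / Lf) * (a + SΔ) :=
    hθ.sum_sq_step_le hLf hm (fun k hk => (hlam k hk).1) hΔ hΔs hfstar n
  -- `√(x y) ≤ (x + y) / 2` with `x = 2 m / Lf` and `y = a + SΔ`
  have hsqrtQ : √Q ≤ m / Lf + (a + SΔ) / 2 := by
    rw [Real.sqrt_le_left (by positivity)]
    nlinarith [sq_nonneg (m / Lf - (a + SΔ) / 2)]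
  have hV : m / Lf ≤ m / Lf * (a + 1 + SΔ) := le_mul_of_one_le_right (by positivity) (by linarith)
  have hnum : (Lf + Λ) * (1 / 2 + √Q) + ∑ k ∈ Icc 1 n, Δ k
      ≤ ((Lf + Λ) * (m / Lf + 1) + 1) * (a + 1 + SΔ) :=
    calc (Lf + Λ) * (1 / 2 + √Q) + ∑ k ∈ Icc 1 n, Δ k
        ≤ (Lf + Λ) * ((m / Lf + 1) * (a + 1 + SΔ)) + (a + 1 + SΔ) := by gcongr <;> linarith
      _ = ((Lf + Λ) * (m / Lf + 1) + 1) * (a + 1 + SΔ) := by ring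
  have hs : 0 < √(n : ℝ) := Real.sqrt_pos.2 (by exact_mod_cast nonempty_Icc.1 hne)
  rw [le_div_iff₀' hs, mul_assoc]
  exact (hθ.sqrt_mul_inf'_stationarity_le hΘ hf hLf.le hL hlam hne).trans (by gcongr)

end

end IsProximalBMMSeq

/-- iteration complexity of BMM with Euclidean proximal surrogates.
There is a constant `C > 0` depending only on `m`, `L_f` and `Λ` such that for any BMM
sequence with proximal surrogates `g_n^i(θ) = f_n^i(θ) + (λ_n/2)‖θ - θ_{n-1}^i‖²`,
`L_f ≤ λ_n ≤ Λ`, and summable optimality gaps, for every `n ≥ 2`: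
`min_{1≤k≤n} S(θ_k) ≤ C (f(θ_0) - f* + 1 + ∑_j Δ_j) (log n)/√n`. -/
theorem bmm_proximal_complexity (m : ℕ) (hm : 1 ≤ m) (Lf Λbd : ℝ) (hLf : 0 < Lf) :
    ∃ C : ℝ, 0 < C ∧
      ∀ (E : Fin m → Type u)
        [∀ i, NormedAddCommGroup (E i)] [∀ i, InnerProductSpace ℝ (E i)]
        [∀ i, FiniteDimensional ℝ (E i)]
        (Θ : ∀ i, Set (E i)),
        (∀ i, (Θ i).Nonempty) → (∀ i, IsClosed (Θ i)) → (∀ i, Convex ℝ (Θ i)) →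
        ∀ f : (∀ i, E i) → ℝ, Differentiable ℝ f →
        (∀ x y : ∀ i, E i,
          Real.sqrt (∑ i, ‖gradi f x i - gradi f y i‖ ^ 2)
            ≤ Lf * Real.sqrt (∑ i, ‖x i - y i‖ ^ 2)) →
        ∀ fstar : ℝ, (∀ x, fstar ≤ f x) →
        ∀ θ : ℕ → ∀ i, E i, (∀ n i, θ n i ∈ Θ i) →
        ∀ lam : ℕ → ℝ, (∀ n, 1 ≤ n → Lf ≤ lam n ∧ lam n ≤ Λbd) →
        ∀ Δ : ℕ → ℝ, (∀ n, 1 ≤ n → 0 ≤ Δ n) → (Summable fun n => Δ (n + 1)) →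
        (∀ n, 1 ≤ n → ∀ i, ∀ v ∈ Θ i,
          f (mixPt θ n i (θ n i)) + lam n / 2 * ‖θ n i - θ (n - 1) i‖ ^ 2
            ≤ f (mixPt θ n i v) + lam n / 2 * ‖v - θ (n - 1) i‖ ^ 2 + Δ n) →
        ∀ n : ℕ, ∀ hn : 2 ≤ n,
          (Finset.Icc 1 n).inf'
              ⟨1, Finset.mem_Icc.mpr ⟨le_refl 1, le_trans one_le_two hn⟩⟩
              (fun k => Smeasure f Θ (θ k))
            ≤ C * (f (θ 0) - fstar + 1 + ∑' j, Δ (j + 1)) * Real.log n / Real.sqrt n := by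
  set K := m * ((Lf + max Lf Λbd) * (m / Lf + 1) + 1)
  have hK : 0 < K := by
    have hm' : (0 : ℝ) < m := by exact_mod_cast hm
    positivity
  refine ⟨K / Real.log 2, div_pos hK (Real.log_pos one_lt_two), ?_⟩
  intro E _ _ _ Θ _ _ hΘ f hf hLip fstar hfstar θ hmem lam hlam Δ hΔ hΔs hmin n hn
  have hθ : IsProximalBMMSeq f Θ θ lam Δ := ⟨hmem, hmin⟩
  have hL (x y : ∀ i, E i) :
      ‖WithLp.toLp 2 (gradi f x - gradi f y)‖ ≤ Lf * ‖WithLp.toLp 2 (x - y)‖ := by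
    simpa only [norm_toLp_sub] using hLip x y
  have hlam' (k : ℕ) (hk : 1 ≤ k) : Lf ≤ lam k ∧ lam k ≤ max Lf Λbd :=
    ⟨(hlam k hk).1, (hlam k hk).2.trans (le_max_right _ _)⟩
  have hV : 0 ≤ f (θ 0) - fstar + 1 + ∑' j, Δ (j + 1) := by
    have : 0 ≤ ∑' j, Δ (j + 1) := tsum_nonneg fun j => hΔ (j + 1) (by omega)
    linarith [hfstar (θ 0)]
  have hlog : 1 ≤ Real.log n / Real.log 2 :=
    (one_le_div (Real.log_pos one_lt_two)).2 (Real.log_le_log two_pos (by exact_mod_cast hn))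
  calc _ ≤ K * (f (θ 0) - fstar + 1 + ∑' j, Δ (j + 1)) / √n :=
        hθ.inf'_stationarity_le hΘ hf hLf hL hm hlam' hΔ hΔs hfstar _
    _ ≤ K * (f (θ 0) - fstar + 1 + ∑' j, Δ (j + 1)) * (Real.log n / Real.log 2) / √n :=
        div_le_div_of_nonneg_right (le_mul_of_one_le_right (by positivity) hlog)
          (Real.sqrt_nonneg _)
    _ = _ := by ring
end

section
/- Suppose (θ_n)_{n≥1} is a BMM sequence with Euclidean proximal surrogates, i.e. g_n^i(θ) = f_n^i(θ) + (λ_n/2)‖θ − θ_{n−1}^i‖² for all n, i, where L_f ≤ λ_n ≤ Λ for a fixed constant Λ < ∞. Then for every n ≥ 1 and every b ∈ (0, 1]: Σ_{i=1}^m ⟨∇f_{n+1}^i(θ_n^i), θ_{n+1}^i − θ_n^i⟩ ≤ b·Σ_{i=1}^m inf{⟨∇f_{n+1}^i(θ_n^i), u⟩ : u ∈ E_i, ‖u‖ ≤ 1, θ_n^i + u ∈ Θ_i} + ((L_f + Λ)/2)·m·b² + (L_f/2)·Σ_{i=1}^m ‖θ_n^i − θ_{n+1}^i‖² + m·Δ_{n+1},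 where ∇f_{n+1}^i denotes the gradient of the marginal map f_{n+1}^i on E_i. -/
open Filter RealInnerProductSpace

/-- The gradient `∇ f_n^i (v)` of the `i`-th marginal objective at cycle `n`,
evaluated at `v : E i`. -/
noncomputable def gradMarg {m : ℕ} {E : Fin m → Type*} [∀ i, NormedAddCommGroup (E i)]
    [∀ i, InnerProductSpace ℝ (E i)] [∀ i, CompleteSpace (E i)]
    (f : (∀ i, E i) → ℝ) (θ : ℕ → ∀ i, E i) (n : ℕ) (i : Fin m) (v : E i) : E i :=
  gradient (fun u => f (mixPt θ n i u)) v

/-!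
With step size `λ ≥ L_f`, the proximal term dominates the curvature of `f` along each block, so
comparing the approximate minimizer `θ_{n+1}^i` of the surrogate with the feasible competitor
`θ_n^i + b u` and bounding both values of the marginal objective by the quadratic upper and lower
models around `θ_n^i` (descent lemma) yields
`⟪∇f_{n+1}^i(θ_n^i), θ_{n+1}^i - θ_n^i⟫ ≤ b ⟪∇f_{n+1}^i(θ_n^i), u⟫ + ((L_f + Λ)/2) b² + Δ_{n+1}`
for every admissible direction `u`. Taking the infimum over `u` and summing over the blocks
gives the claim.
-/

theorem le_mul_csInf_add {S : Set ℝ} (hS : S.Nonempty) {a b K : ℝ} (hb : 0 < b)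
    (h : ∀ z ∈ S, a ≤ b * z + K) : a ≤ b * sInf S + K := by
  have : (a - K) / b ≤ sInf S :=
    le_csInf hS fun z hz => by rw [div_le_iff₀ hb]; linarith [h z hz]
  rw [div_le_iff₀' hb] at this
  linarith

section Descent

variable {F : Type*} [NormedAddCommGroup F] [InnerProductSpace ℝ F] [CompleteSpace F]

theorem abs_sub_sub_inner_gradient_le {h : F → ℝ} (hd : Differentiable ℝ h) {L : ℝ}
    (hlip : ∀ x y, ‖gradient h x - gradient h y‖ ≤ L * ‖x - y‖) (v d : F) :
    |h (v + d) - h v - ⟪gradient h v, d⟫| ≤ L / 2 * ‖d‖ ^ 2 := by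
  set φ : ℝ → ℝ := fun t => h (v + t • d) - h v - t * ⟪gradient h v, d⟫
  have hφ : ∀ t, HasDerivAt φ (⟪gradient h (v + t • d) - gradient h v, d⟫) t := by
    intro t
    have hline : HasDerivAt (fun s : ℝ => v + s • d) d t := by
      simpa using ((hasDerivAt_id t).smul_const d).const_add v
    have hcomp := (hd (v + t • d)).hasGradientAt.hasFDerivAt.comp_hasDerivAt t hline
    simp only [InnerProductSpace.toDual_apply_apply] at hcomp
    rw [inner_sub_left]
    exact (hcomp.sub_const (h v)).sub (hasDerivAt_mul_const _)
  have hB : ∀ t, HasDerivAt (fun s : ℝ => L / 2 * ‖d‖ ^ 2 * s ^ 2) (L * t * ‖d‖ ^ 2) t :=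
    fun t => ((hasDerivAt_pow 2 t).const_mul _).congr_deriv (by norm_num; ring)
  have hbound : ∀ t ∈ Set.Ico (0 : ℝ) 1,
      ‖⟪gradient h (v + t • d) - gradient h v, d⟫‖ ≤ L * t * ‖d‖ ^ 2 := by
    rintro t ⟨ht, -⟩
    calc ‖⟪gradient h (v + t • d) - gradient h v, d⟫‖
        ≤ ‖gradient h (v + t • d) - gradient h v‖ * ‖d‖ := norm_inner_le_norm _ _
      _ ≤ L * ‖t • d‖ * ‖d‖ := by
          gcongr
          simpa using hlip (v + t • d) v
      _ = L * t * ‖d‖ ^ 2 := by rw [norm_smul, Real.norm_of_nonneg ht]; ring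
  have key := image_norm_le_of_norm_deriv_right_le_deriv_boundary
    (fun t _ => (hφ t).continuousAt.continuousWithinAt) (fun t _ => (hφ t).hasDerivWithinAt)
    (by simp [φ]) hB hbound (Set.right_mem_Icc.2 zero_le_one)
  simpa [φ] using key

theorem inner_gradient_sub_le_of_prox_step {h : F → ℝ} (hd : Differentiable ℝ h) {L : ℝ}
    (hL : 0 ≤ L) (hlip : ∀ x y, ‖gradient h x - gradient h y‖ ≤ L * ‖x - y‖) {C : Set F}
    (hC : Convex ℝ C) {x y : F} (hx : x ∈ C) {lam Λ δ : ℝ} (hLlam : L ≤ lam)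
    (hlamΛ : lam ≤ Λ)
    (hy : ∀ v ∈ C, h y + lam / 2 * ‖y - x‖ ^ 2 ≤ h v + lam / 2 * ‖v - x‖ ^ 2 + δ)
    {b : ℝ} (hb : 0 ≤ b) (hb1 : b ≤ 1) {u : F} (hu : ‖u‖ ≤ 1) (hxu : x + u ∈ C) :
    ⟪gradient h x, y - x⟫ ≤ b * ⟪gradient h x, u⟫ + (L + Λ) / 2 * b ^ 2 + δ := by
  have hmem : x + b • u ∈ C := by simpa using hC.add_smul_sub_mem hx hxu ⟨hb, hb1⟩
  have hcompare := hy _ hmem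
  rw [add_sub_cancel_left, norm_smul, Real.norm_of_nonneg hb, mul_pow] at hcompare
  have upper := (abs_le.1 (abs_sub_sub_inner_gradient_le hd hlip x (b • u))).2
  rw [real_inner_smul_right, norm_smul, Real.norm_of_nonneg hb, mul_pow] at upper
  have lower := (abs_le.1 (abs_sub_sub_inner_gradient_le hd hlip x (y - x))).1
  rw [add_sub_cancel] at lower
  have hu2 : b ^ 2 * ‖u‖ ^ 2 ≤ b ^ 2 :=
    mul_le_of_le_one_right (sq_nonneg b) (pow_le_one₀ (norm_nonneg u) hu)
  linarith [mul_nonneg (sub_nonneg.2 hLlam) (sq_nonneg ‖y - x‖),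
    mul_nonneg (add_nonneg hL (hL.trans hLlam)) (sub_nonneg.2 hu2),
    mul_nonneg (sub_nonneg.2 hlamΛ) (sq_nonneg b)]

theorem inner_gradient_sub_le_mul_sInf_of_prox_step {h : F → ℝ} (hd : Differentiable ℝ h)
    {L : ℝ} (hL : 0 ≤ L) (hlip : ∀ x y, ‖gradient h x - gradient h y‖ ≤ L * ‖x - y‖)
    {C : Set F} (hC : Convex ℝ C) {x y : F} (hx : x ∈ C) {lam Λ δ : ℝ} (hLlam : L ≤ lam)
    (hlamΛ : lam ≤ Λ)
    (hy : ∀ v ∈ C, h y + lam / 2 * ‖y - x‖ ^ 2 ≤ h v + lam / 2 * ‖v - x‖ ^ 2 + δ)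
    {b : ℝ} (hb : 0 < b) (hb1 : b ≤ 1) :
    ⟪gradient h x, y - x⟫
      ≤ b * sInf ((fun u => ⟪gradient h x, u⟫) '' {u : F | ‖u‖ ≤ 1 ∧ x + u ∈ C})
        + (L + Λ) / 2 * b ^ 2 + δ := by
  rw [add_assoc]
  refine le_mul_csInf_add ?_ hb ?_
  · exact ⟨_, 0, ⟨by simp, by simpa using hx⟩, rfl⟩
  rintro _ ⟨u, ⟨hu, hxu⟩, rfl⟩
  exact (inner_gradient_sub_le_of_prox_step hd hL hlip hC hx hLlam hlamΛ hy hb.le hb1 hu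
    hxu).trans_eq (add_assoc _ _ _)

end Descent

section Blocks

variable {m : ℕ} {E : Fin m → Type*} [∀ i, NormedAddCommGroup (E i)]
  [∀ i, InnerProductSpace ℝ (E i)] [∀ i, CompleteSpace (E i)]

theorem gradient_update_eq_gradi (f : (∀ i, E i) → ℝ) (x : ∀ i, E i) (i : Fin m) (u : E i) :
    gradient (fun v => f (Function.update x i v)) u = gradi f (Function.update x i u) i := by
  simp only [gradi, Function.update_idem, Function.update_self]

theorem norm_gradient_update_sub_le {f : (∀ i, E i) → ℝ} {Lf : ℝ}
    (hsmooth : ∀ x y : ∀ i, E i,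
      Real.sqrt (∑ i, ‖gradi f x i - gradi f y i‖ ^ 2)
        ≤ Lf * Real.sqrt (∑ i, ‖x i - y i‖ ^ 2))
    (x : ∀ i, E i) (i : Fin m) (u w : E i) :
    ‖gradient (fun v => f (Function.update x i v)) u
        - gradient (fun v => f (Function.update x i v)) w‖ ≤ Lf * ‖u - w‖ := by
  rw [gradient_update_eq_gradi, gradient_update_eq_gradi]
  set y := Function.update x i u
  set z := Function.update x i w
  have hsum : ∑ j, ‖y j - z j‖ ^ 2 = ‖u - w‖ ^ 2 := by
    rw [Finset.sum_eq_single i (fun j _ hj => by simp [y, z, hj]) (by simp)]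
    simp [y, z]
  calc ‖gradi f y i - gradi f z i‖ = √(‖gradi f y i - gradi f z i‖ ^ 2) :=
        (Real.sqrt_sq (norm_nonneg _)).symm
    _ ≤ √(∑ j, ‖gradi f y j - gradi f z j‖ ^ 2) :=
        Real.sqrt_le_sqrt <| Finset.single_le_sum (f := fun j => ‖gradi f y j - gradi f z j‖ ^ 2)
          (fun j _ => by positivity) (Finset.mem_univ i)
    _ ≤ Lf * √(∑ j, ‖y j - z j‖ ^ 2) := hsmooth y z
    _ = Lf * ‖u - w‖ := by rw [hsum, Real.sqrt_sq (norm_nonneg _)]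

end Blocks

theorem bmm_proximal_first_order_optimality_general {m : ℕ}
    {E : Fin m → Type*} [∀ i, NormedAddCommGroup (E i)]
    [∀ i, InnerProductSpace ℝ (E i)] [∀ i, FiniteDimensional ℝ (E i)]
    (Θ : ∀ i, Set (E i)) (hconv : ∀ i, Convex ℝ (Θ i))
    (f : (∀ i, E i) → ℝ) (Lf : ℝ) (hLf : 0 < Lf)
    (hdiff : Differentiable ℝ f)
    (hsmooth : ∀ x y : ∀ i, E i,
      Real.sqrt (∑ i, ‖gradi f x i - gradi f y i‖ ^ 2)
        ≤ Lf * Real.sqrt (∑ i, ‖x i - y i‖ ^ 2))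
    (θ : ℕ → ∀ i, E i) (hθ : ∀ n i, θ n i ∈ Θ i)
    (lam : ℕ → ℝ) (Λbd : ℝ) (hlam : ∀ n, 1 ≤ n → Lf ≤ lam n ∧ lam n ≤ Λbd)
    (Δ : ℕ → ℝ)
    (hopt : ∀ n, 1 ≤ n → ∀ i, ∀ v ∈ Θ i,
      f (mixPt θ n i (θ n i)) + lam n / 2 * ‖θ n i - θ (n - 1) i‖ ^ 2
        ≤ f (mixPt θ n i v) + lam n / 2 * ‖v - θ (n - 1) i‖ ^ 2 + Δ n) :
    ∀ n, 1 ≤ n → ∀ b : ℝ, 0 < b → b ≤ 1 →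
      ∑ i, ⟪gradMarg f θ (n + 1) i (θ n i), θ (n + 1) i - θ n i⟫
        ≤ b * ∑ i, sInf ((fun u => ⟪gradMarg f θ (n + 1) i (θ n i), u⟫) ''
              {u : E i | ‖u‖ ≤ 1 ∧ θ n i + u ∈ Θ i})
          + (Lf + Λbd) / 2 * (m : ℝ) * b ^ 2
          + Lf / 2 * ∑ i, ‖θ n i - θ (n + 1) i‖ ^ 2
          + (m : ℝ) * Δ (n + 1) := by
  intro n _ b hb hb1
  obtain ⟨hlamLo, hlamHi⟩ := hlam (n + 1) (by omega)
  set s := fun i => sInf ((fun u => ⟪gradMarg f θ (n + 1) i (θ n i), u⟫) ''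
    {u : E i | ‖u‖ ≤ 1 ∧ θ n i + u ∈ Θ i})
  have hblock : ∀ i, ⟪gradMarg f θ (n + 1) i (θ n i), θ (n + 1) i - θ n i⟫
      ≤ b * s i + (Lf + Λbd) / 2 * b ^ 2 + Δ (n + 1) := fun i =>
    inner_gradient_sub_le_mul_sInf_of_prox_step (h := fun v => f (mixPt θ (n + 1) i v))
      (hdiff.comp fun v => (hasFDerivAt_update _ v).differentiableAt) hLf.le
      (norm_gradient_update_sub_le hsmooth _ i) (hconv i) (hθ n i) hlamLo hlamHi
      (hopt (n + 1) (by omega) i) hb hb1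
  have hgap : 0 ≤ Lf / 2 * ∑ i, ‖θ n i - θ (n + 1) i‖ ^ 2 := by positivity
  calc _ ≤ ∑ i, (b * s i + (Lf + Λbd) / 2 * b ^ 2 + Δ (n + 1)) :=
        Finset.sum_le_sum fun i _ => hblock i
    _ = b * ∑ i, s i + (Lf + Λbd) / 2 * (m : ℝ) * b ^ 2 + (m : ℝ) * Δ (n + 1) := by
        simp only [Finset.sum_add_distrib, Finset.sum_const, Finset.card_univ, Fintype.card_fin,
          nsmul_eq_mul, ← Finset.mul_sum]
        ring
    _ ≤ _ := by linarith

/-- asymptotic first-order optimality inequality for the Euclidean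
proximal BMM.  For a BMM sequence with proximal surrogates
`g_n^i(θ) = f_n^i(θ) + (λ_n/2)‖θ - θ_{n-1}^i‖²`, `L_f ≤ λ_n ≤ Λ`, for every `n ≥ 1` and
every `b ∈ (0,1]`:
`∑_i ⟪∇f_{n+1}^i(θ_n^i), θ_{n+1}^i - θ_n^i⟫
   ≤ b ∑_i inf{⟪∇f_{n+1}^i(θ_n^i), u⟫ : ‖u‖ ≤ 1, θ_n^i + u ∈ Θ_i}
     + ((L_f + Λ)/2) m b² + (L_f/2) ∑_i ‖θ_n^i - θ_{n+1}^i‖² + m Δ_{n+1}`. -/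
theorem bmm_proximal_first_order_optimality {m : ℕ} (hm : 1 ≤ m)
    {E : Fin m → Type*} [∀ i, NormedAddCommGroup (E i)]
    [∀ i, InnerProductSpace ℝ (E i)] [∀ i, FiniteDimensional ℝ (E i)]
    (Θ : ∀ i, Set (E i)) (hne : ∀ i, (Θ i).Nonempty)
    (hclosed : ∀ i, IsClosed (Θ i)) (hconv : ∀ i, Convex ℝ (Θ i))
    (f : (∀ i, E i) → ℝ) (Lf : ℝ) (hLf : 0 < Lf)
    (hdiff : Differentiable ℝ f)
    (hsmooth : ∀ x y : ∀ i, E i,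
      Real.sqrt (∑ i, ‖gradi f x i - gradi f y i‖ ^ 2)
        ≤ Lf * Real.sqrt (∑ i, ‖x i - y i‖ ^ 2))
    (fstar : ℝ) (hbdd : ∀ x, fstar ≤ f x)
    (θ : ℕ → ∀ i, E i) (hθ : ∀ n i, θ n i ∈ Θ i)
    (lam : ℕ → ℝ) (Λbd : ℝ) (hlam : ∀ n, 1 ≤ n → Lf ≤ lam n ∧ lam n ≤ Λbd)
    (Δ : ℕ → ℝ) (hΔ : ∀ n, 1 ≤ n → 0 ≤ Δ n)
    (hopt : ∀ n, 1 ≤ n → ∀ i, ∀ v ∈ Θ i,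
      f (mixPt θ n i (θ n i)) + lam n / 2 * ‖θ n i - θ (n - 1) i‖ ^ 2
        ≤ f (mixPt θ n i v) + lam n / 2 * ‖v - θ (n - 1) i‖ ^ 2 + Δ n) :
    ∀ n, 1 ≤ n → ∀ b : ℝ, 0 < b → b ≤ 1 →
      ∑ i, ⟪gradMarg f θ (n + 1) i (θ n i), θ (n + 1) i - θ n i⟫
        ≤ b * ∑ i, sInf ((fun u => ⟪gradMarg f θ (n + 1) i (θ n i), u⟫) ''
              {u : E i | ‖u‖ ≤ 1 ∧ θ n i + u ∈ Θ i})
          + (Lf + Λbd) / 2 * (m : ℝ) * b ^ 2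
          + Lf / 2 * ∑ i, ‖θ n i - θ (n + 1) i‖ ^ 2
          + (m : ℝ) * Δ (n + 1) :=
  bmm_proximal_first_order_optimality_general Θ hconv f Lf hLf hdiff hsmooth θ hθ lam Λbd hlam Δ
    hopt
end

section
/- Let E be a real Hilbert space and let f, g : E → ℝ be differentiable, with ∇f L_f-Lipschitz and ∇g L_g-Lipschitz for constants L_f, L_g ≥ 0. If g(x) ≥ f(x) for every x ∈ E, then for every x ∈ E: ‖∇g(x) − ∇f(x)‖² ≤ 2(L_f + L_g)·(g(x) − f(x)). -/
open RealInnerProductSpace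

/-!
Apply the descent lemma to the nonnegative gap `h = g - f`, whose gradient is
`(L_f + L_g)`-Lipschitz: a gradient step `x - t ∇h(x)` gives
`0 ≤ h(x) - t ‖∇h(x)‖² + (L/2) t² ‖∇h(x)‖²`, and `t = 1/L` yields the bound
(for `L = 0`, letting `t → ∞` forces `∇h(x) = 0`).
-/

theorem le_two_mul_mul_of_forall_sub_le {a c L : ℝ} (hL : 0 ≤ L)
    (h : ∀ t, 0 ≤ t → t * a - L / 2 * t ^ 2 * a ≤ c) : a ≤ 2 * L * c := by
  rcases hL.eq_or_lt with rfl | hL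
  · by_contra! ha
    rw [mul_zero, zero_mul] at ha
    have := h ((|c| + 1) / a) (by positivity)
    rw [div_mul_cancel₀ _ ha.ne'] at this
    linarith [le_abs_self c]
  · have := h (1 / L) (by positivity)
    have hval : 1 / L * a - L / 2 * (1 / L) ^ 2 * a = a / (2 * L) := by
      field_simp
      ring
    rwa [hval, div_le_iff₀ (by positivity), mul_comm] at this

section LipschitzGradient

variable {E : Type*} [NormedAddCommGroup E] [InnerProductSpace ℝ E]

theorem HasGradientAt.sub [CompleteSpace E] {f g : E → ℝ} {f' g' x : E}
    (hf : HasGradientAt f f' x) (hg : HasGradientAt g g' x) :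
    HasGradientAt (f - g) (f' - g') x := by
  rw [hasGradientAt_iff_hasFDerivAt, map_sub]
  exact hf.hasFDerivAt.sub hg.hasFDerivAt

theorem HasGradientAt.hasDerivAt_comp_add_smul [CompleteSpace E] {h : E → ℝ} {g x v : E} {t : ℝ}
    (hh : HasGradientAt h g (x + t • v)) :
    HasDerivAt (fun s : ℝ => h (x + s • v)) ⟪g, v⟫ t := by
  have hline : HasDerivAt (fun s : ℝ => x + s • v) v t := by
    simpa using ((hasDerivAt_id t).smul_const v).const_add x
  simpa [InnerProductSpace.toDual_apply_apply, Function.comp_def] using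
    hh.hasFDerivAt.comp_hasDerivAt t hline

theorem inner_sub_le_of_lipschitz {G : E → E} {L : ℝ}
    (hG : ∀ x y, ‖G x - G y‖ ≤ L * ‖x - y‖) (x v : E) {t : ℝ} (ht : 0 ≤ t) :
    ⟪G (x + t • v) - G x, v⟫ ≤ L * t * ‖v‖ ^ 2 :=
  calc ⟪G (x + t • v) - G x, v⟫ ≤ ‖G (x + t • v) - G x‖ * ‖v‖ := real_inner_le_norm _ _
    _ ≤ L * ‖(x + t • v) - x‖ * ‖v‖ := by gcongr; exact hG _ _
    _ = L * t * ‖v‖ ^ 2 := by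
      rw [add_sub_cancel_left, norm_smul, Real.norm_of_nonneg ht]
      ring

/-- The descent lemma. -/
theorem le_add_inner_add_sq_of_lipschitz_gradient [CompleteSpace E] {h : E → ℝ} {G : E → E}
    {L : ℝ} (hh : ∀ x, HasGradientAt h (G x) x) (hG : ∀ x y, ‖G x - G y‖ ≤ L * ‖x - y‖)
    (x v : E) : h (x + v) ≤ h x + ⟪G x, v⟫ + L / 2 * ‖v‖ ^ 2 := by
  set φ : ℝ → ℝ := fun s => h (x + s • v) - s * ⟪G x, v⟫ - L / 2 * s ^ 2 * ‖v‖ ^ 2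
  have hφ : ∀ s, HasDerivAt φ (⟪G (x + s • v), v⟫ - ⟪G x, v⟫ - L * s * ‖v‖ ^ 2) s := by
    intro s
    have hquad := ((hasDerivAt_pow 2 s).const_mul (L / 2)).mul_const (‖v‖ ^ 2)
    exact (((hh (x + s • v)).hasDerivAt_comp_add_smul.sub
      ((hasDerivAt_id s).mul_const ⟪G x, v⟫)).sub hquad).congr_deriv (by push_cast; ring)
  have hanti : AntitoneOn φ (Set.Ici 0) := by
    refine antitoneOn_of_hasDerivWithinAt_nonpos (convex_Ici 0)
      (fun s _ => (hφ s).continuousAt.continuousWithinAt)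
      (fun s _ => (hφ s).hasDerivWithinAt) fun s hs => ?_
    rw [interior_Ici, Set.mem_Ioi] at hs
    have := inner_sub_le_of_lipschitz hG x v hs.le
    rw [inner_sub_left] at this
    linarith
  have h10 : φ 1 ≤ φ 0 := hanti (Set.mem_Ici.2 le_rfl) (Set.mem_Ici.2 zero_le_one) zero_le_one
  simp only [φ, one_smul, zero_smul, add_zero, one_pow, one_mul, zero_mul, ne_eq,
    OfNat.ofNat_ne_zero, not_false_eq_true, zero_pow, mul_zero, sub_zero] at h10
  linarith

theorem sq_norm_le_of_nonneg_of_lipschitz_gradient [CompleteSpace E] {h : E → ℝ} {G : E → E}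
    {L : ℝ} (hL : 0 ≤ L) (h_nonneg : ∀ x, 0 ≤ h x) (hh : ∀ x, HasGradientAt h (G x) x)
    (hG : ∀ x y, ‖G x - G y‖ ≤ L * ‖x - y‖) (x : E) : ‖G x‖ ^ 2 ≤ 2 * L * h x := by
  refine le_two_mul_mul_of_forall_sub_le hL fun t _ => ?_
  have hstep := le_add_inner_add_sq_of_lipschitz_gradient hh hG x (-(t • G x))
  rw [inner_neg_right, real_inner_smul_right, real_inner_self_eq_norm_sq, norm_neg, norm_smul,
    Real.norm_eq_abs, mul_pow, sq_abs] at hstep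
  linarith [h_nonneg (x + -(t • G x))]

end LipschitzGradient

/-- bound on the gradient of the majorization gap.  If `f, g : E → ℝ`
are differentiable on a real Hilbert space with `L_f`- resp. `L_g`-Lipschitz gradients and
`g ≥ f` everywhere, then `‖∇g(x) - ∇f(x)‖² ≤ 2(L_f + L_g)(g(x) - f(x))` for every `x`. -/
theorem sq_norm_grad_gap_le {E : Type*} [NormedAddCommGroup E]
    [InnerProductSpace ℝ E] [CompleteSpace E]
    (f g : E → ℝ) (Lf Lg : ℝ) (hLf : 0 ≤ Lf) (hLg : 0 ≤ Lg)
    (hf : Differentiable ℝ f) (hg : Differentiable ℝ g)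
    (hfLip : ∀ x y : E, ‖gradient f x - gradient f y‖ ≤ Lf * ‖x - y‖)
    (hgLip : ∀ x y : E, ‖gradient g x - gradient g y‖ ≤ Lg * ‖x - y‖)
    (hge : ∀ x : E, f x ≤ g x) :
    ∀ x : E, ‖gradient g x - gradient f x‖ ^ 2 ≤ 2 * (Lf + Lg) * (g x - f x) := by
  have hgap : ∀ y, HasGradientAt (g - f) (gradient g y - gradient f y) y := fun y =>
    (hg y).hasGradientAt.sub (hf y).hasGradientAt
  have hgapLip : ∀ a b, ‖(gradient g a - gradient f a) - (gradient g b - gradient f b)‖ ≤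
      (Lf + Lg) * ‖a - b‖ := fun a b =>
    calc _ = ‖(gradient g a - gradient g b) - (gradient f a - gradient f b)‖ := by
          rw [sub_sub_sub_comm]
      _ ≤ ‖gradient g a - gradient g b‖ + ‖gradient f a - gradient f b‖ := norm_sub_le _ _
      _ ≤ (Lf + Lg) * ‖a - b‖ := by linarith [hfLip a b, hgLip a b]
  exact sq_norm_le_of_nonneg_of_lipschitz_gradient (add_nonneg hLf hLg)
    (fun y => sub_nonneg.2 (hge y)) hgap hgapLip
end
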